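/- arXiv:2601.04663 — 4 statements merged into one kernel-verified Lean document; each statement's English description precedes it below -/
import Mathlib

section
/- Knight's identity: for every τ ∈ (0,1) and all real numbers x and y, ρ_τ(x − y) − ρ_τ(x) = −y·ψ_τ(x) + ∫₀^y (1{x ≤ t} − 1{x ≤ 0}) dt, where the integral is the oriented Lebesgue interval integral from 0 to y. -/
open MeasureTheory intervalIntegral

/-- The quantile check function `ρ_τ(u) = u·(τ − 1{u < 0})`. -/
noncomputable def checkFun (τ u : ℝ) : ℝ := u * (τ - if u < 0 then 1 else 0)

/-- `ψ_τ(x) = τ − 1{x ≤ 0}`. -/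
noncomputable def psiFun (τ x : ℝ) : ℝ := τ - if x ≤ 0 then 1 else 0

/-!
The check function is linear plus a ramp, `ρ_τ(u) = τ u + (−u)⁺`, and the step `t ↦ 1{x ≤ t}`
is the right derivative of the ramp `t ↦ (t − x)⁺`. The fundamental theorem of calculus
therefore evaluates the integral as `(y − x)⁺ − (−x)⁺ − y·1{x ≤ 0}`, and the identity becomes
a linear one between ramps.
-/

lemma checkFun_eq_mul_add_max (τ u : ℝ) : checkFun τ u = τ * u + max (-u) 0 := by
  unfold checkFun
  split_ifs
  · rw [max_eq_left (by linarith)]; ring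
  · rw [max_eq_right (by linarith)]; ring

lemma hasDerivWithinAt_max_sub_Ioi (x t : ℝ) :
    HasDerivWithinAt (fun s => max (s - x) 0) (if x ≤ t then 1 else 0) (Set.Ioi t) t := by
  split_ifs with hxt
  · have hramp : ∀ s ∈ Set.Ici t, max (s - x) 0 = s - x := fun s hs =>
      max_eq_left (by linarith [Set.mem_Ici.mp hs])
    exact ((hasDerivAt_id t).sub_const x).hasDerivWithinAt.congr
      (fun s hs => hramp s (Set.Ioi_subset_Ici_self hs)) (hramp t Set.self_mem_Ici)
  · have hzero : (fun s => max (s - x) 0) =ᶠ[nhds t] fun _ => 0 :=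
      (eventually_lt_nhds (not_le.mp hxt)).mono fun s hs => max_eq_right (by linarith)
    exact ((hasDerivAt_const t (0 : ℝ)).congr_of_eventuallyEq hzero).hasDerivWithinAt

lemma intervalIntegrable_step (x a b : ℝ) :
    IntervalIntegrable (fun t => if x ≤ t then (1 : ℝ) else 0) volume a b :=
  Monotone.intervalIntegrable fun s t hst => by
    split_ifs <;> linarith

lemma integral_step (x a b : ℝ) :
    ∫ t in a..b, (if x ≤ t then (1 : ℝ) else 0) = max (b - x) 0 - max (a - x) 0 :=
  integral_eq_sub_of_hasDeriv_right (by fun_prop)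
    (fun t _ => hasDerivWithinAt_max_sub_Ioi x t) (intervalIntegrable_step x a b)

theorem knight_identity_general (τ : ℝ) (x y : ℝ) :
    checkFun τ (x - y) - checkFun τ x =
      -y * psiFun τ x +
        ∫ t in (0 : ℝ)..y,
          ((if x ≤ t then (1 : ℝ) else 0) - (if x ≤ 0 then (1 : ℝ) else 0)) := by
  rw [integral_sub (intervalIntegrable_step x 0 y) intervalIntegrable_const, integral_step,
    intervalIntegral.integral_const, smul_eq_mul, checkFun_eq_mul_add_max,
    checkFun_eq_mul_add_max, psiFun, neg_sub, zero_sub]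
  ring

/-- Knight's identity. -/
theorem knight_identity (τ : ℝ) (hτ : τ ∈ Set.Ioo (0 : ℝ) 1) (x y : ℝ) :
    checkFun τ (x - y) - checkFun τ x =
      -y * psiFun τ x +
        ∫ t in (0 : ℝ)..y,
          ((if x ≤ t then (1 : ℝ) else 0) - (if x ≤ 0 then (1 : ℝ) else 0)) :=
  knight_identity_general τ x y
end

section
/- Contraction of products of perturbed nilpotent operators: let E be a real normed space, p ≥ 1, and N : E → E a continuous linear map with N^p = 0 (the p-fold composition is zero) and ‖N‖ ≤ 1 in operator norm. Let ϱ ≥ 0 satisfy p·ϱ < 1. Then for every sequence B : ℕ → (continuous linear endomorphisms of E) with ‖B_l‖ ≤ ϱ for all l, and every k ≥ 0, ‖(N + B₁)∘(N + B₂)∘···∘(N + B_k)‖ ≤ (1+ϱ)^{p−1}·(p·ϱ)^{⌊k/p⌋}; in particular these operator norms tend to 0 as k → ∞. -/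
section Aux

variable {E : Type*} [NormedAddCommGroup E] [NormedSpace ℝ E]

private def PP (N : E →L[ℝ] E) (B : ℕ → E →L[ℝ] E) (k : ℕ) : E →L[ℝ] E :=
  ((List.range k).map (fun l => N + B (l + 1))).prod

private lemma PP_succ (N : E →L[ℝ] E) (B : ℕ → E →L[ℝ] E) (k : ℕ) :
    PP N B (k+1) = (N + B 1) * PP N (fun l => B (l+1)) k := by
  unfold PP
  rw [List.range_succ_eq_map]
  simp only [List.map_cons, List.prod_cons, List.map_map]
  rfl

private lemma PP_eq (N : E →L[ℝ] E) :
    ∀ (k : ℕ) (B : ℕ → E →L[ℝ] E),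
      PP N B k = N ^ k + ∑ j ∈ Finset.range k,
        N ^ j * B (j+1) * PP N (fun l => B (j+1+l)) (k-(j+1)) := by
  intro k
  induction k with
  | zero => intro B; simp [PP]
  | succ k ih =>
    intro B
    rw [PP_succ, Finset.sum_range_succ']
    nth_rewrite 1 [ih (fun l => B (l+1))]
    have h1 : (fun l => B (l+1)) = (fun l => B (0+1+l)) := by funext l; congr 1; omega
    have key : ∀ i ∈ Finset.range k,
        N * (N^i * B (i+1+1) * PP N (fun l => B (i+1+l+1)) (k-(i+1)))
          = N^(i+1) * B (i+1+1) * PP N (fun l => B (i+1+1+l)) (k+1-(i+1+1)) := by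
      intro i _
      have h2 : (fun l => B (i+1+l+1)) = (fun l => B (i+1+1+l)) := by
        funext l; congr 1; omega
      rw [h2, show k+1-(i+1+1) = k-(i+1) from by omega, ← mul_assoc, ← mul_assoc,
        ← pow_succ']
    rw [mul_add, Finset.mul_sum]
    simp only [add_mul]
    rw [Finset.sum_add_distrib, Finset.sum_congr rfl key]
    have g0 : N ^ 0 * B (0+1) * PP N (fun l => B (0+1+l)) (k+1-(0+1))
        = B 1 * N ^ k + ∑ i ∈ Finset.range k,
            B 1 * (N ^ i * B (i+1+1) * PP N (fun l => B (i+1+l+1)) (k-(i+1))) := by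
      rw [pow_zero, one_mul, show k+1-(0+1) = k from rfl, ← h1,
        ih (fun l => B (l+1)), mul_add]
      simp [Finset.mul_sum]
    rw [g0, pow_succ']
    abel

private lemma norm_one_le' : ‖(1 : E →L[ℝ] E)‖ ≤ 1 := by
  rw [ContinuousLinearMap.one_def]
  exact ContinuousLinearMap.norm_id_le

private lemma norm_pow_le_one' (N : E →L[ℝ] E) (hN : ‖N‖ ≤ 1) (j : ℕ) : ‖N ^ j‖ ≤ 1 := by
  induction j with
  | zero => simpa using (norm_one_le' : ‖(1 : E →L[ℝ] E)‖ ≤ 1)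
  | succ j ih =>
    calc ‖N ^ (j+1)‖ ≤ ‖N ^ j‖ * ‖N‖ := by rw [pow_succ]; exact norm_mul_le _ _
    _ ≤ 1 * 1 := mul_le_mul ih hN (norm_nonneg _) zero_le_one
    _ = 1 := one_mul 1

private lemma PP_crude (N : E →L[ℝ] E) (hN : ‖N‖ ≤ 1) (ϱ : ℝ) (hϱ : 0 ≤ ϱ) :
    ∀ k (B : ℕ → E →L[ℝ] E), (∀ l, ‖B l‖ ≤ ϱ) → ‖PP N B k‖ ≤ (1 + ϱ) ^ k := by
  intro k
  induction k with
  | zero => intro B hB; simpa [PP] using (norm_one_le' : ‖(1 : E →L[ℝ] E)‖ ≤ 1)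
  | succ k ih =>
    intro B hB
    rw [PP_succ]
    calc ‖(N + B 1) * PP N (fun l => B (l+1)) k‖
        ≤ ‖N + B 1‖ * ‖PP N (fun l => B (l+1)) k‖ := norm_mul_le _ _
      _ ≤ (1 + ϱ) * (1 + ϱ) ^ k := by
          apply mul_le_mul _ (ih _ (fun l => hB (l+1))) (norm_nonneg _)
            (by positivity)
          calc ‖N + B 1‖ ≤ ‖N‖ + ‖B 1‖ := norm_add_le _ _
            _ ≤ 1 + ϱ := add_le_add hN (hB 1)
      _ = (1 + ϱ) ^ (k + 1) := (pow_succ' _ _).symm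

private lemma PP_norm_le (p : ℕ) (hp : 1 ≤ p) (N : E →L[ℝ] E) (hNp : N ^ p = 0)
    (hN : ‖N‖ ≤ 1) (ϱ : ℝ) (hϱ : 0 ≤ ϱ) (hpϱ : (p : ℝ) * ϱ < 1) :
    ∀ k (B : ℕ → E →L[ℝ] E), (∀ l, ‖B l‖ ≤ ϱ) →
      ‖PP N B k‖ ≤ (1 + ϱ) ^ (p - 1) * ((p : ℝ) * ϱ) ^ (k / p) := by
  have hR0 : (0:ℝ) ≤ (p : ℝ) * ϱ := by positivity
  have h1ϱ : (1:ℝ) ≤ 1 + ϱ := by linarith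
  intro k
  induction k using Nat.strong_induction_on with
  | _ k ih =>
    intro B hB
    by_cases hk : k < p
    · have hdiv : k / p = 0 := Nat.div_eq_of_lt hk
      rw [hdiv, pow_zero, mul_one]
      calc ‖PP N B k‖ ≤ (1 + ϱ) ^ k := PP_crude N hN ϱ hϱ k B hB
        _ ≤ (1 + ϱ) ^ (p - 1) := pow_le_pow_right₀ h1ϱ (by omega)
    · push_neg at hk
      have hm : 1 ≤ k / p := (Nat.one_le_div_iff (by omega)).mpr hk
      rw [PP_eq N k B]
      have hNk : N ^ k = 0 := by
        rw [show k = p + (k - p) by omega, pow_add, hNp, zero_mul]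
      rw [hNk, zero_add]
      rw [← Finset.sum_subset (Finset.range_subset_range.mpr hk)
        (fun j _ hj => by
          have : N ^ j = 0 := by
            rw [show j = p + (j - p) by simp at hj; omega, pow_add, hNp, zero_mul]
          rw [this, zero_mul, zero_mul])]
      calc ‖∑ j ∈ Finset.range p, N ^ j * B (j+1) * PP N (fun l => B (j+1+l)) (k-(j+1))‖
          ≤ ∑ j ∈ Finset.range p, ‖N ^ j * B (j+1) * PP N (fun l => B (j+1+l)) (k-(j+1))‖ :=
            norm_sum_le _ _
        _ ≤ ∑ j ∈ Finset.range p, ϱ * ((1 + ϱ) ^ (p - 1) * ((p:ℝ) * ϱ) ^ (k / p - 1)) := by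
            apply Finset.sum_le_sum
            intro j hj
            simp only [Finset.mem_range] at hj
            have hlt : k - (j+1) < k := by omega
            have ihj := ih (k - (j+1)) hlt (fun l => B (j+1+l)) (fun l => hB (j+1+l))
            have hexp : k / p - 1 ≤ (k - (j+1)) / p := by
              have h1 : k ≤ k - (j+1) + p := by omega
              have h2 : k / p ≤ (k - (j+1) + p) / p := Nat.div_le_div_right h1
              rw [Nat.add_div_right _ (by omega : 0 < p)] at h2
              omega
            have hpow : ((p:ℝ) * ϱ) ^ ((k - (j+1)) / p) ≤ ((p:ℝ) * ϱ) ^ (k / p - 1) :=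
              pow_le_pow_of_le_one hR0 (le_of_lt hpϱ) hexp
            calc ‖N ^ j * B (j+1) * PP N (fun l => B (j+1+l)) (k-(j+1))‖
                ≤ ‖N ^ j * B (j+1)‖ * ‖PP N (fun l => B (j+1+l)) (k-(j+1))‖ := norm_mul_le _ _
              _ ≤ ‖N ^ j‖ * ‖B (j+1)‖ * ‖PP N (fun l => B (j+1+l)) (k-(j+1))‖ := by
                  apply mul_le_mul_of_nonneg_right (norm_mul_le _ _) (norm_nonneg _)
              _ ≤ 1 * ϱ * ((1 + ϱ) ^ (p - 1) * ((p:ℝ) * ϱ) ^ ((k - (j+1)) / p)) := by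
                  apply mul_le_mul _ ihj (norm_nonneg _) (by positivity)
                  exact mul_le_mul (norm_pow_le_one' N hN j) (hB (j+1)) (norm_nonneg _)
                    zero_le_one
              _ = ϱ * ((1 + ϱ) ^ (p - 1) * ((p:ℝ) * ϱ) ^ ((k - (j+1)) / p)) := by
                  rw [one_mul]
              _ ≤ ϱ * ((1 + ϱ) ^ (p - 1) * ((p:ℝ) * ϱ) ^ (k / p - 1)) := by
                  apply mul_le_mul_of_nonneg_left _ hϱ
                  exact mul_le_mul_of_nonneg_left hpow (by positivity)
        _ = (p:ℝ) * (ϱ * ((1 + ϱ) ^ (p - 1) * ((p:ℝ) * ϱ) ^ (k / p - 1))) := by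
            rw [Finset.sum_const, Finset.card_range, nsmul_eq_mul]
        _ = (1 + ϱ) ^ (p - 1) * (((p:ℝ) * ϱ) ^ (k / p - 1) * ((p:ℝ) * ϱ)) := by ring
        _ = (1 + ϱ) ^ (p - 1) * ((p:ℝ) * ϱ) ^ (k / p) := by
            rw [← pow_succ, show k / p - 1 + 1 = k / p from by omega]

end Aux

/-- Contraction of products of perturbed nilpotent operators. Compositions
are ordered from left to right in increasing index order (the empty
composition is the identity), i.e. `(N+B₁) ∘ (N+B₂) ∘ ⋯ ∘ (N+B_k)`. -/
theorem perturbed_nilpotent_product_contraction {E : Type*}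
    [NormedAddCommGroup E] [NormedSpace ℝ E]
    (p : ℕ) (hp : 1 ≤ p) (N : E →L[ℝ] E) (hNp : N ^ p = 0) (hN : ‖N‖ ≤ 1)
    (ϱ : ℝ) (hϱ : 0 ≤ ϱ) (hpϱ : (p : ℝ) * ϱ < 1)
    (B : ℕ → E →L[ℝ] E) (hB : ∀ l, ‖B l‖ ≤ ϱ) :
    (∀ k : ℕ, ‖((List.range k).map (fun l => N + B (l + 1))).prod‖
        ≤ (1 + ϱ) ^ (p - 1) * ((p : ℝ) * ϱ) ^ (k / p)) ∧
    Filter.Tendsto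
      (fun k : ℕ => ‖((List.range k).map (fun l => N + B (l + 1))).prod‖)
      Filter.atTop (nhds 0) := by
  have hbound := PP_norm_le p hp N hNp hN ϱ hϱ hpϱ
  have hbound' : ∀ k : ℕ, ‖((List.range k).map (fun l => N + B (l + 1))).prod‖
      ≤ (1 + ϱ) ^ (p - 1) * ((p : ℝ) * ϱ) ^ (k / p) := fun k => hbound k B hB
  refine ⟨hbound', ?_⟩
  have hR0 : (0:ℝ) ≤ (p : ℝ) * ϱ := by positivity
  have hdiv : Filter.Tendsto (fun k : ℕ => k / p) Filter.atTop Filter.atTop := by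
    apply Filter.tendsto_atTop.mpr
    intro b
    filter_upwards [Filter.eventually_ge_atTop (b * p)] with k hk
    exact (Nat.le_div_iff_mul_le (by omega)).mpr hk
  have htend : Filter.Tendsto
      (fun k : ℕ => (1 + ϱ) ^ (p - 1) * ((p : ℝ) * ϱ) ^ (k / p))
      Filter.atTop (nhds 0) := by
    have h1 : Filter.Tendsto (fun m : ℕ => ((p : ℝ) * ϱ) ^ m) Filter.atTop (nhds 0) :=
      tendsto_pow_atTop_nhds_zero_of_lt_one hR0 hpϱ
    have h2 := (h1.comp hdiv).const_mul ((1 + ϱ) ^ (p - 1))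
    simpa using h2
  exact squeeze_zero (fun k => norm_nonneg _) hbound' htend
end

section
/- Products of companion matrices vanish under a summed-norm condition (Lemma 2 of the paper): let n, p ≥ 1 and ϱ ∈ [0, 1/p). For each l ∈ ℕ, let A_{l,1}, …, A_{l,p} be n×n real matrices with ∑_{j=1}^{p} ‖A_{l,j}‖ ≤ ϱ, and let 𝒜_l be the (np) × (np) companion block matrix whose first block row is (A_{l,1}, A_{l,2}, …, A_{l,p}), whose (i+1, i)-th n×n blocks are identity matrices for i = 1, …, p−1, and whose remaining blocks are zero. Then ‖𝒜₁·𝒜₂···𝒜_k‖ ≤ (1+ϱ)^{p−1}·(p·ϱ)^{⌊k/p⌋} for all k, and in particular ‖𝒜₁·𝒜₂···𝒜_k‖ → 0 as k → ∞. -/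
open Matrix

/-- The ℓ²-operator (spectral) norm of a square real matrix, i.e. the operator
norm of the induced map between Euclidean spaces. -/
noncomputable def l2OpNorm {m : Type*} [Fintype m] [DecidableEq m]
    (M : Matrix m m ℝ) : ℝ :=
  ‖Matrix.toEuclideanCLM (𝕜 := ℝ) M‖

/-- The `(np) × (np)` companion block matrix with first block row
`(A 0, A 1, …, A (p-1))` and identity `n × n` blocks on the first block
subdiagonal. -/
def companionBlock {n p : ℕ} (A : Fin p → Matrix (Fin n) (Fin n) ℝ) :
    Matrix (Fin p × Fin n) (Fin p × Fin n) ℝ :=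
  fun ia jb =>
    if (ia.1 : ℕ) = 0 then A jb.1 ia.2 jb.2
    else if (ia.1 : ℕ) = (jb.1 : ℕ) + 1 ∧ ia.2 = jb.2 then 1 else 0

/-! Cut the matrices into `n × n` blocks and measure a block row by the sum of the spectral
norms of its blocks. Multiplying on the left by a companion matrix moves block row `i` to block
row `i + 1` and puts `∑ₘ A_{l,m} · (block row m)` into block row `0`. Hence, as `ϱ ≤ 1`, after
`t` factors every block row has size at most `1` and the rows `0, …, t - 1` have size at most
`ϱ`: a product of `p` consecutive factors has norm at most `p ϱ`. A single factor is the block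
shift, a submatrix of the identity, plus its first block row, so its norm is at most `1 + ϱ`.
Grouping `𝒜₁ ⋯ 𝒜ₖ` into `⌊k/p⌋` runs of `p` factors and fewer than `p` remaining ones gives the
bound. -/

open scoped Matrix.Norms.L2Operator

namespace Matrix

variable {𝕜 : Type*} [RCLike 𝕜] {ι κ l m n o : Type*} [Fintype l] [Fintype m] [Fintype n]
  [Fintype o]

lemma l2_opNorm_one_le [DecidableEq m] : ‖(1 : Matrix m m 𝕜)‖ ≤ 1 := by
  have h := l2_opNorm_conjTranspose_mul_self (1 : Matrix m m 𝕜)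
  rw [conjTranspose_one, mul_one] at h
  nlinarith [norm_nonneg (1 : Matrix m m 𝕜)]

lemma l2_opNorm_submatrix_id_le [DecidableEq n] (A : Matrix m n 𝕜) {f : l → m}
    (hf : f.Injective) : ‖A.submatrix f id‖ ≤ ‖A‖ := by
  rw [l2_opNorm_def]
  refine ContinuousLinearMap.opNorm_le_bound _ (norm_nonneg A) fun x => ?_
  refine le_trans ?_ (l2_opNorm_mulVec A x)
  simp only [EuclideanSpace.norm_eq]
  gcongr
  calc ∑ y, ‖(A.submatrix f id *ᵥ x) y‖ ^ 2
      = ∑ z ∈ Finset.univ.map ⟨f, hf⟩, ‖(A *ᵥ x) z‖ ^ 2 := by rw [Finset.sum_map]; rfl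
    _ ≤ _ := Finset.sum_le_univ_sum_of_nonneg fun _ => by positivity

lemma l2_opNorm_submatrix_le [DecidableEq l] [DecidableEq m] [DecidableEq n] [DecidableEq o]
    (A : Matrix m n 𝕜) {f : l → m} (hf : f.Injective) {g : o → n} (hg : g.Injective) :
    ‖A.submatrix f g‖ ≤ ‖A‖ :=
  calc ‖A.submatrix f g‖ = ‖(Aᴴ.submatrix g id)ᴴ.submatrix f id‖ := by
        rw [conjTranspose_submatrix, conjTranspose_conjTranspose, submatrix_submatrix]; rfl
    _ ≤ ‖Aᴴ.submatrix g id‖ :=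
        (l2_opNorm_submatrix_id_le _ hf).trans_eq (l2_opNorm_conjTranspose _)
    _ ≤ ‖A‖ := (l2_opNorm_submatrix_id_le _ hg).trans_eq (l2_opNorm_conjTranspose _)

def blocks (M : Matrix (ι × m) (κ × n) 𝕜) : Matrix ι κ (Matrix m n 𝕜) :=
  (comp ι κ m n 𝕜).symm M

lemma blocks_mul [Fintype ι] (M N : Matrix (ι × m) (ι × m) 𝕜) :
    blocks (M * N) = blocks M * blocks N :=
  map_mul (compRingEquiv ι m 𝕜).symm M N

variable [DecidableEq ι] [DecidableEq κ] [DecidableEq m] [DecidableEq n]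

lemma blocks_one [Fintype ι] : blocks (1 : Matrix (ι × m) (ι × m) 𝕜) = 1 :=
  map_one (compRingEquiv ι m 𝕜).symm

def blockEmbed (i : ι) (j : κ) (B : Matrix m n 𝕜) : Matrix (ι × m) (κ × n) 𝕜 :=
  (1 : Matrix (ι × m) (ι × m) 𝕜).submatrix id (Prod.mk i) * B *
    (1 : Matrix (κ × n) (κ × n) 𝕜).submatrix (Prod.mk j) id

lemma blockEmbed_apply (i : ι) (j : κ) (B : Matrix m n 𝕜) (q : ι) (a : m) (q' : κ) (b : n) :
    blockEmbed i j B (q, a) (q', b) = if q = i ∧ q' = j then B a b else 0 := by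
  simp only [blockEmbed, mul_apply, submatrix_apply, one_apply, Prod.ext_iff]
  split_ifs with h
  · simp [h.1, h.2]
  · refine Finset.sum_eq_zero fun x _ => ?_
    by_cases hq : q = i
    · have hq' : j ≠ q' := fun hq' => h ⟨hq, hq'.symm⟩
      simp [hq']
    · simp [hq]

variable [Fintype ι] [Fintype κ]

lemma norm_blockEmbed_le (i : ι) (j : κ) (B : Matrix m n 𝕜) : ‖blockEmbed i j B‖ ≤ ‖B‖ := by
  have h₁ : ‖(1 : Matrix (ι × m) (ι × m) 𝕜).submatrix id (Prod.mk i)‖ ≤ 1 :=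
    (l2_opNorm_submatrix_le _ Function.injective_id (Prod.mk_right_injective i)).trans
      l2_opNorm_one_le
  have h₂ : ‖(1 : Matrix (κ × n) (κ × n) 𝕜).submatrix (Prod.mk j) id‖ ≤ 1 :=
    (l2_opNorm_submatrix_le _ (Prod.mk_right_injective j) Function.injective_id).trans
      l2_opNorm_one_le
  calc ‖blockEmbed i j B‖
      ≤ ‖(1 : Matrix (ι × m) (ι × m) 𝕜).submatrix id (Prod.mk i)‖ * ‖B‖ *
          ‖(1 : Matrix (κ × n) (κ × n) 𝕜).submatrix (Prod.mk j) id‖ :=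
        (l2_opNorm_mul _ _).trans (by gcongr; exact l2_opNorm_mul _ _)
    _ ≤ 1 * ‖B‖ * 1 := by gcongr
    _ = ‖B‖ := by ring

lemma sum_blockEmbed_blocks (M : Matrix (ι × m) (κ × n) 𝕜) :
    ∑ i, ∑ j, blockEmbed i j (blocks M i j) = M := by
  ext ⟨q, a⟩ ⟨q', b⟩
  simp [sum_apply, blockEmbed_apply, blocks, ite_and]

lemma norm_le_sum_norm_blocks (M : Matrix (ι × m) (κ × n) 𝕜) :
    ‖M‖ ≤ ∑ i, ∑ j, ‖blocks M i j‖ := by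
  conv_lhs => rw [← sum_blockEmbed_blocks M]
  refine (norm_sum_le _ _).trans (Finset.sum_le_sum fun i _ => ?_)
  exact (norm_sum_le _ _).trans (Finset.sum_le_sum fun j _ => norm_blockEmbed_le _ _ _)

end Matrix

lemma List.prod_map_range_add {M : Type*} [Monoid M] (f : ℕ → M) (s t : ℕ) :
    ((List.range (s + t)).map f).prod
      = ((List.range s).map f).prod * ((List.range t).map fun l => f (s + l)).prod := by
  simp [List.range_add, Function.comp_def]

lemma sum_norm_sum_mul_le {R ι κ : Type*} [SeminormedRing R] [Fintype ι] [Fintype κ]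
    (a : κ → R) (b : κ → ι → R) : ∑ j, ‖∑ k, a k * b k j‖ ≤ ∑ k, ‖a k‖ * ∑ j, ‖b k j‖ :=
  calc ∑ j, ‖∑ k, a k * b k j‖ ≤ ∑ j, ∑ k, ‖a k‖ * ‖b k j‖ :=
        Finset.sum_le_sum fun j _ => (norm_sum_le _ _).trans
          (Finset.sum_le_sum fun k _ => norm_mul_le _ _)
    _ = ∑ k, ‖a k‖ * ∑ j, ‖b k j‖ := by simp_rw [Finset.mul_sum]; exact Finset.sum_comm

section Companion

variable {n p : ℕ}

lemma companionBlock_eq_shift_add (A : Fin (p + 1) → Matrix (Fin n) (Fin n) ℝ) :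
    companionBlock A
      = (1 : Matrix (Fin (p + 2) × Fin n) (Fin (p + 2) × Fin n) ℝ).submatrix
          (Prod.map Fin.castSucc id) (Prod.map Fin.succ id) + ∑ j, blockEmbed 0 j (A j) := by
  ext ⟨i, a⟩ ⟨j, b⟩
  rw [Matrix.add_apply, Matrix.sum_apply]
  simp only [companionBlock, blockEmbed_apply, submatrix_apply, Prod.map_apply, id, one_apply,
    Prod.mk.injEq]
  induction i using Fin.cases with
  | zero => simp [(Fin.succ_ne_zero j).symm]
  | succ i => simp [Fin.ext_iff]

lemma norm_companionBlock_le (A : Fin (p + 1) → Matrix (Fin n) (Fin n) ℝ) :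
    ‖companionBlock A‖ ≤ 1 + ∑ j, ‖A j‖ := by
  rw [companionBlock_eq_shift_add]
  refine (norm_add_le _ _).trans (add_le_add ?_ ?_)
  · exact (l2_opNorm_submatrix_le _ ((Fin.castSucc_injective _).prodMap Function.injective_id)
      ((Fin.succ_injective _).prodMap Function.injective_id)).trans l2_opNorm_one_le
  · exact (norm_sum_le _ _).trans (Finset.sum_le_sum fun j _ => norm_blockEmbed_le _ _ _)

lemma blocks_companionBlock_mul_zero (A : Fin (p + 1) → Matrix (Fin n) (Fin n) ℝ)
    (Q : Matrix (Fin (p + 1) × Fin n) (Fin (p + 1) × Fin n) ℝ) (j : Fin (p + 1)) :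
    blocks (companionBlock A * Q) 0 j = ∑ k, A k * blocks Q k j := by
  rw [blocks_mul, mul_apply]
  rfl

lemma blocks_companionBlock_mul_succ (A : Fin (p + 1) → Matrix (Fin n) (Fin n) ℝ)
    (Q : Matrix (Fin (p + 1) × Fin n) (Fin (p + 1) × Fin n) ℝ) (i : Fin p) (j : Fin (p + 1)) :
    blocks (companionBlock A * Q) i.succ j = blocks Q i.castSucc j := by
  have : blocks (companionBlock A) i.succ = Pi.single i.castSucc 1 := by
    ext k a b
    have key : (i : ℕ) = k ↔ k = i.castSucc := by simp [Fin.ext_iff, eq_comm]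
    by_cases hk : k = i.castSucc <;> simp [blocks, companionBlock, key, hk, one_apply]
  rw [blocks_mul, mul_apply, this]
  simp [Pi.single_apply]

variable {ϱ : ℝ}

lemma sum_norm_blocks_prod_companionBlock_le (hϱ : ϱ ≤ 1)
    (B : ℕ → Fin (p + 1) → Matrix (Fin n) (Fin n) ℝ) (hB : ∀ l, ∑ j, ‖B l j‖ ≤ ϱ) (t : ℕ)
    (i : Fin (p + 1)) :
    ∑ j, ‖blocks ((List.range t).map fun l => companionBlock (B l)).prod i j‖
      ≤ if (i : ℕ) < t then ϱ else 1 := by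
  induction t generalizing B i with
  | zero =>
    simpa [blocks_one, one_apply, apply_ite] using l2_opNorm_one_le
  | succ t ih =>
    have ih' k := (ih (fun l => B (l + 1)) (fun l => hB (l + 1)) k).trans
      (show (if (k : ℕ) < t then ϱ else 1) ≤ 1 by split_ifs <;> linarith)
    rw [List.prod_range_succ']
    induction i using Fin.cases with
    | zero =>
      rw [if_pos (by simp)]
      simp_rw [blocks_companionBlock_mul_zero]
      calc _ ≤ ∑ k, ‖B 0 k‖ * _ := sum_norm_sum_mul_le _ _
        _ ≤ ∑ k, ‖B 0 k‖ * 1 := by gcongr with k; exact ih' k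
        _ ≤ ϱ := by simpa using hB 0
    | succ i =>
      simp_rw [blocks_companionBlock_mul_succ]
      simpa using ih (fun l => B (l + 1)) (fun l => hB (l + 1)) i.castSucc

lemma norm_prod_companionBlock_le_pow (B : ℕ → Fin (p + 1) → Matrix (Fin n) (Fin n) ℝ)
    (hB : ∀ l, ∑ j, ‖B l j‖ ≤ ϱ) (k : ℕ) :
    ‖((List.range k).map fun l => companionBlock (B l)).prod‖ ≤ (1 + ϱ) ^ k := by
  induction k generalizing B with
  | zero => simpa using l2_opNorm_one_le
  | succ k ih =>
    have hϱ : 0 ≤ ϱ := (Finset.sum_nonneg fun j _ => norm_nonneg _).trans (hB 0)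
    rw [List.prod_range_succ', pow_succ']
    exact (norm_mul_le _ _).trans <| mul_le_mul
      ((norm_companionBlock_le _).trans (by linarith [hB 0])) (ih _ fun l => hB (l + 1))
      (norm_nonneg _) (by linarith)

lemma norm_prod_companionBlock_period_le (hϱ : ϱ ≤ 1)
    (B : ℕ → Fin (p + 1) → Matrix (Fin n) (Fin n) ℝ) (hB : ∀ l, ∑ j, ‖B l j‖ ≤ ϱ) :
    ‖((List.range (p + 1)).map fun l => companionBlock (B l)).prod‖ ≤ (p + 1) * ϱ :=
  calc _ ≤ ∑ i : Fin (p + 1), ϱ := (norm_le_sum_norm_blocks _).trans <| Finset.sum_le_sum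
        fun i _ => (sum_norm_blocks_prod_companionBlock_le hϱ B hB _ i).trans_eq (if_pos i.isLt)
    _ = (p + 1) * ϱ := by simp

lemma norm_prod_companionBlock_le (hϱ : ϱ ≤ 1)
    (B : ℕ → Fin (p + 1) → Matrix (Fin n) (Fin n) ℝ) (hB : ∀ l, ∑ j, ‖B l j‖ ≤ ϱ) (k : ℕ) :
    ‖((List.range k).map fun l => companionBlock (B l)).prod‖
      ≤ (1 + ϱ) ^ p * ((p + 1) * ϱ) ^ (k / (p + 1)) := by
  have hϱ0 : 0 ≤ ϱ := (Finset.sum_nonneg fun j _ => norm_nonneg _).trans (hB 0)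
  induction k using Nat.strong_induction_on generalizing B with
  | _ k ih =>
    by_cases hk : k < p + 1
    · rw [Nat.div_eq_of_lt hk, pow_zero, mul_one]
      exact (norm_prod_companionBlock_le_pow B hB k).trans
        (pow_le_pow_right₀ (by linarith) (by omega))
    · obtain ⟨m, rfl⟩ : ∃ m, k = p + 1 + m := ⟨k - (p + 1), by omega⟩
      rw [List.prod_map_range_add, Nat.add_div_left _ p.succ_pos]
      calc _ ≤ ((p + 1) * ϱ) * ((1 + ϱ) ^ p * ((p + 1) * ϱ) ^ (m / (p + 1))) :=
            (norm_mul_le _ _).trans (mul_le_mul (norm_prod_companionBlock_period_le hϱ B hB)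
              (ih m (by omega) _ fun l => hB (p + 1 + l)) (norm_nonneg _) (by positivity))
        _ = _ := by ring

end Companion

theorem companion_products_vanish_general (n p : ℕ) (hp : 1 ≤ p)
    (ϱ : ℝ) (hϱ0 : 0 ≤ ϱ) (hϱ1 : ϱ < 1 / p)
    (A : ℕ → Fin p → Matrix (Fin n) (Fin n) ℝ)
    (hA : ∀ l : ℕ, ∑ j : Fin p, l2OpNorm (A l j) ≤ ϱ) :
    (∀ k : ℕ,
      l2OpNorm (((List.range k).map (fun l => companionBlock (A (l + 1)))).prod)
        ≤ (1 + ϱ) ^ (p - 1) * ((p : ℝ) * ϱ) ^ (k / p)) ∧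
    Filter.Tendsto
      (fun k : ℕ =>
        l2OpNorm (((List.range k).map (fun l => companionBlock (A (l + 1)))).prod))
      Filter.atTop (nhds 0) := by
  obtain ⟨p, rfl⟩ : ∃ q, p = q + 1 := ⟨p - 1, by omega⟩
  have hpϱ : ((p + 1 : ℕ) : ℝ) * ϱ < 1 := by
    rwa [lt_div_iff₀ (by positivity), mul_comm] at hϱ1
  have hϱ : ϱ ≤ 1 := by push_cast at hpϱ; nlinarith
  have hbound k : l2OpNorm (((List.range k).map fun l => companionBlock (A (l + 1))).prod)
      ≤ (1 + ϱ) ^ (p + 1 - 1) * (((p + 1 : ℕ) : ℝ) * ϱ) ^ (k / (p + 1)) := by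
    refine (norm_prod_companionBlock_le hϱ _ (fun l => hA (l + 1)) k).trans_eq ?_
    simp
  refine ⟨hbound, squeeze_zero (fun k => norm_nonneg _) hbound ?_⟩
  simpa using ((tendsto_pow_atTop_nhds_zero_of_lt_one (by positivity) hpϱ).comp
    (Nat.tendsto_div_const_atTop p.succ_ne_zero)).const_mul ((1 + ϱ) ^ (p + 1 - 1))

/-- Products of companion matrices vanish under a summed-norm condition
(Lemma 2 of the paper). -/
theorem companion_products_vanish (n p : ℕ) (hn : 1 ≤ n) (hp : 1 ≤ p)
    (ϱ : ℝ) (hϱ0 : 0 ≤ ϱ) (hϱ1 : ϱ < 1 / p)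
    (A : ℕ → Fin p → Matrix (Fin n) (Fin n) ℝ)
    (hA : ∀ l : ℕ, ∑ j : Fin p, l2OpNorm (A l j) ≤ ϱ) :
    (∀ k : ℕ,
      l2OpNorm (((List.range k).map (fun l => companionBlock (A (l + 1)))).prod)
        ≤ (1 + ϱ) ^ (p - 1) * ((p : ℝ) * ϱ) ^ (k / p)) ∧
    Filter.Tendsto
      (fun k : ℕ =>
        l2OpNorm (((List.range k).map (fun l => companionBlock (A (l + 1)))).prod))
      Filter.atTop (nhds 0) :=
  companion_products_vanish_general n p hp ϱ hϱ0 hϱ1 A hA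
end

section
/- Infinite moving-average representation under uniform bounds and summable coefficient norms: let E be a real Banach space, A : ℤ → (continuous linear endomorphisms of E), e : ℤ → E, and Y : ℤ → E satisfy Y_t = A_t(Y_{t−1}) + e_t for all t ∈ ℤ. Define Γ_{t,0} = id and Γ_{t,k} = A_t ∘ A_{t−1} ∘ ··· ∘ A_{t−k+1} for k ≥ 1. Suppose there are M ≥ 0 and a summable sequence c : ℕ → ℝ such that ‖Y_s‖ ≤ M and ‖e_s‖ ≤ M for all s ∈ ℤ, and ‖Γ_{t,k}‖ ≤ c_k (operator norm) for all t ∈ ℤ and k ∈ ℕ, with c_k → 0 as k → ∞. Then for every t ∈ ℤ the series ∑_{k=0}^{∞} Γ_{t,k}(e_{t−k}) converges absolutely in E and Y_t = ∑_{k=0}^{∞} Γ_{t,k}(e_{t−k}). -/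
/-- `GammaCLM A t k = A t ∘ A (t-1) ∘ ⋯ ∘ A (t-k+1)`, with `GammaCLM A t 0 = id`. -/
noncomputable def GammaCLM {E : Type*} [NormedAddCommGroup E] [NormedSpace ℝ E]
    (A : ℤ → E →L[ℝ] E) (t : ℤ) : ℕ → (E →L[ℝ] E)
  | 0 => ContinuousLinearMap.id ℝ E
  | k + 1 => (GammaCLM A t k).comp (A (t - k))

lemma gamma_partial {E : Type*} [NormedAddCommGroup E] [NormedSpace ℝ E]
    (A : ℤ → E →L[ℝ] E) (e Y : ℤ → E)
    (h : ∀ t : ℤ, Y t = A t (Y (t - 1)) + e t) (t : ℤ) :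
    ∀ n : ℕ, Y t = GammaCLM A t n (Y (t - n)) +
      ∑ k ∈ Finset.range n, GammaCLM A t k (e (t - k)) := by
  intro n
  induction n with
  | zero => simp [GammaCLM]
  | succ n ih =>
    have hcast : (t : ℤ) - (n + 1 : ℕ) = t - n - 1 := by push_cast; ring
    have e1 : GammaCLM A t (n+1) (Y (t - ((n:ℕ)+1:ℕ))) =
        GammaCLM A t n (A (t - n) (Y (t - n - 1))) := by
      rw [hcast]; rfl
    rw [Finset.sum_range_succ, ih, e1, h (t - n), map_add]
    abel

/-- Infinite moving-average representation under uniform bounds and summable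
coefficient norms. -/
theorem infinite_moving_average {E : Type*} [NormedAddCommGroup E]
    [NormedSpace ℝ E] [CompleteSpace E]
    (A : ℤ → E →L[ℝ] E) (e Y : ℤ → E)
    (h : ∀ t : ℤ, Y t = A t (Y (t - 1)) + e t)
    (M : ℝ) (hM : 0 ≤ M) (hY : ∀ s : ℤ, ‖Y s‖ ≤ M) (he : ∀ s : ℤ, ‖e s‖ ≤ M)
    (c : ℕ → ℝ) (hc : Summable c)
    (hΓ : ∀ (t : ℤ) (k : ℕ), ‖GammaCLM A t k‖ ≤ c k)
    (hc0 : Filter.Tendsto c Filter.atTop (nhds 0)) :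
    ∀ t : ℤ,
      Summable (fun k : ℕ => ‖GammaCLM A t k (e (t - k))‖) ∧
      Y t = ∑' k : ℕ, GammaCLM A t k (e (t - k)) := by
  intro t
  have hbound : ∀ k : ℕ, ‖GammaCLM A t k (e (t - k))‖ ≤ c k * M := fun k =>
    le_trans ((GammaCLM A t k).le_opNorm _)
      (mul_le_mul (hΓ t k) (he _) (norm_nonneg _) ((norm_nonneg _).trans (hΓ t k)))
  have hsum : Summable (fun k : ℕ => ‖GammaCLM A t k (e (t - k))‖) :=
    Summable.of_nonneg_of_le (fun k => norm_nonneg _) hbound (hc.mul_right M)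
  refine ⟨hsum, ?_⟩
  have hsum' : Summable (fun k : ℕ => GammaCLM A t k (e (t - k))) := hsum.of_norm
  -- partial sums tend to the tsum
  have h1 := hsum'.hasSum.tendsto_sum_nat
  -- partial sums tend to Y t
  have h2 : Filter.Tendsto (fun n : ℕ => ∑ k ∈ Finset.range n, GammaCLM A t k (e (t - k)))
      Filter.atTop (nhds (Y t)) := by
    have key : ∀ n : ℕ, ‖Y t - ∑ k ∈ Finset.range n, GammaCLM A t k (e (t - k))‖ ≤ c n * M := by
      intro n
      rw [gamma_partial A e Y h t n]
      simp only [add_sub_cancel_right]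
      exact le_trans ((GammaCLM A t n).le_opNorm _)
        (mul_le_mul (hΓ t n) (hY _) (norm_nonneg _) ((norm_nonneg _).trans (hΓ t n)))
    have hcM : Filter.Tendsto (fun n => c n * M) Filter.atTop (nhds 0) := by
      simpa using hc0.mul_const M
    have hdiff : Filter.Tendsto
        (fun n : ℕ => Y t - ∑ k ∈ Finset.range n, GammaCLM A t k (e (t - k)))
        Filter.atTop (nhds 0) := by
      rw [tendsto_zero_iff_norm_tendsto_zero]
      exact squeeze_zero (fun n => norm_nonneg _) key hcM
    have := (tendsto_const_nhds (x := Y t) (f := Filter.atTop (α := ℕ))).sub hdiff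
    simpa using this
  exact tendsto_nhds_unique h2 h1
end
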